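/- Consider the directed weighted graph on states c_{m,n,i}, d_{m,n,i} from the PGL_3(F_q[t]) adjacency table. Any closed positive-weight path of length N that visits a state with first coordinate difference m - n = r > 0 via the descending zig-zag c_{m,n,2} → d_{m-1,n,3} → c_{m-1,n,2} → ⋯ → c_{n,n,2} must satisfy N ≥ 2r + 1. Consequently every state (m,n) visited by a closed path of length N satisfies m - n ≤ N and the set of states visited by closed paths of length N is finite. -/
import Mathlib


/-- A state of the `PGL₃(𝔽_q[t])` chamber transition system: a pointed chamber
`c_{m,n,i}` (`isD = false`) or `d_{m,n,i}` (`isD = true`). -/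
structure ChSt where
  isD : Bool
  m : ℕ
  n : ℕ
  i : ℕ
deriving DecidableEq

/-- The positive-weight transitions of the full `PGL₃(𝔽_q[t])` adjacency table:
`c_{m,n,1} → c_{m,n,2}`, `c_{m,n,1} → d_{m,n,1}`;
`c_{m,n,2} → c_{m,n,3}` (if `m = n`), `c_{m,n,2} → d_{m-1,n,3}` (if `m ≠ n`);
`c_{m,n,3} → c_{m,n,1}` (if `n = 0`), `c_{m,n,3} → d_{m-1,n-1,2}` (if `n ≠ 0`);
`d_{m,n,1} → c_{m+1,n+1,1}`, `d_{m,n,1} → d_{m,n,2}`;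
`d_{m,n,2} → c_{m+1,n,3}`, `d_{m,n,2} → d_{m,n,3}`;
`d_{m,n,3} → c_{m,n,2}` (the transition `d_{m,n,3} → d_{m,n,1}` has weight `0`). -/
def ChStep : ChSt → ChSt → Prop := fun x y =>
  (x.isD = false ∧ x.i = 1 ∧ y = ⟨false, x.m, x.n, 2⟩) ∨
  (x.isD = false ∧ x.i = 1 ∧ y = ⟨true, x.m, x.n, 1⟩) ∨
  (x.isD = false ∧ x.i = 2 ∧ x.m = x.n ∧ y = ⟨false, x.m, x.n, 3⟩) ∨
  (x.isD = false ∧ x.i = 2 ∧ x.m ≠ x.n ∧ 1 ≤ x.m ∧ y = ⟨true, x.m - 1, x.n, 3⟩) ∨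
  (x.isD = false ∧ x.i = 3 ∧ x.n = 0 ∧ y = ⟨false, x.m, x.n, 1⟩) ∨
  (x.isD = false ∧ x.i = 3 ∧ x.n ≠ 0 ∧ 1 ≤ x.m ∧ y = ⟨true, x.m - 1, x.n - 1, 2⟩) ∨
  (x.isD = true ∧ x.i = 1 ∧ y = ⟨false, x.m + 1, x.n + 1, 1⟩) ∨
  (x.isD = true ∧ x.i = 1 ∧ y = ⟨true, x.m, x.n, 2⟩) ∨
  (x.isD = true ∧ x.i = 2 ∧ y = ⟨false, x.m + 1, x.n, 3⟩) ∨
  (x.isD = true ∧ x.i = 2 ∧ y = ⟨true, x.m, x.n, 3⟩) ∨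
  (x.isD = true ∧ x.i = 3 ∧ y = ⟨false, x.m, x.n, 2⟩)

/-- A closed positive-weight path of length `N`: an `N`-periodic sequence of states all of
whose consecutive pairs are allowed transitions. -/
def IsClosedChPath (N : ℕ) (p : ℕ → ChSt) : Prop :=
  1 ≤ N ∧ (∀ j, p (j + N) = p j) ∧ ∀ j, ChStep (p j) (p (j + 1))

namespace Stmt19Aux

lemma eta2 (s : ChSt) (h1 : s.isD = false) (h2 : s.i = 2) : s = ⟨false, s.m, s.n, 2⟩ := by
  cases s; simp_all

lemma c2_step {x y : ChSt} (hs : ChStep x y) (hD : x.isD = false) (hi : x.i = 2)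
    (hmn : x.n < x.m) : y = ⟨true, x.m - 1, x.n, 3⟩ := by
  rcases hs with ⟨h1,h2,h3⟩|⟨h1,h2,h3⟩|⟨h1,h2,h3,h4⟩|⟨h1,h2,h3,h4,h5⟩|⟨h1,h2,h3,h4⟩|
    ⟨h1,h2,h3,h4,h5⟩|⟨h1,h2,h3⟩|⟨h1,h2,h3⟩|⟨h1,h2,h3⟩|⟨h1,h2,h3⟩|⟨h1,h2,h3⟩ <;>
    first | omega | simp_all

lemma d3_step {x y : ChSt} (hs : ChStep x y) (hD : x.isD = true) (hi : x.i = 3) :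
    y = ⟨false, x.m, x.n, 2⟩ := by
  rcases hs with ⟨h1,h2,h3⟩|⟨h1,h2,h3⟩|⟨h1,h2,h3,h4⟩|⟨h1,h2,h3,h4,h5⟩|⟨h1,h2,h3,h4⟩|
    ⟨h1,h2,h3,h4,h5⟩|⟨h1,h2,h3⟩|⟨h1,h2,h3⟩|⟨h1,h2,h3⟩|⟨h1,h2,h3⟩|⟨h1,h2,h3⟩ <;>
    first | omega | simp_all

lemma target_i {x y : ChSt} (hs : ChStep x y) : y.i ≤ 3 := by
  rcases hs with ⟨h1,h2,h3⟩|⟨h1,h2,h3⟩|⟨h1,h2,h3,h4⟩|⟨h1,h2,h3,h4,h5⟩|⟨h1,h2,h3,h4⟩|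
    ⟨h1,h2,h3,h4,h5⟩|⟨h1,h2,h3⟩|⟨h1,h2,h3⟩|⟨h1,h2,h3⟩|⟨h1,h2,h3⟩|⟨h1,h2,h3⟩ <;> simp_all

variable {N : ℕ} {p : ℕ → ChSt}

lemma per_mul (h : IsClosedChPath N p) : ∀ q j, p (j + q * N) = p j := by
  intro q
  induction q with
  | zero => simp
  | succ q ih =>
    intro j
    have : j + (q+1) * N = (j + q * N) + N := by ring
    rw [this, h.2.1, ih]

lemma per_mod (h : IsClosedChPath N p) : ∀ j, p j = p (j % N) := by
  intro j
  conv_lhs => rw [show j = j % N + (j / N) * N by rw [Nat.mod_add_div']]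
  rw [per_mul h]

lemma per_mod' (h : IsClosedChPath N p) {a b : ℕ} (hab : a % N = b % N) : p a = p b := by
  rw [per_mod h a, per_mod h b, hab]

end Stmt19Aux

namespace Stmt19Aux

variable {N : ℕ} {p : ℕ → ChSt}

lemma zigzag (h : IsClosedChPath N p) (j a b : ℕ) (hp : p j = ⟨false, a, b, 2⟩)
    (hab : b < a) : 2 * (a - b) + 1 ≤ N := by
  have key : ∀ k, k ≤ a - b → p (j + 2 * k) = ⟨false, a - k, b, 2⟩ := by
    intro k
    induction k with
    | zero => intro _; simpa using hp
    | succ k ih =>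
      intro hk
      have hk' : k ≤ a - b := by omega
      have h1 := ih hk'
      have hlt : b < a - k := by omega
      have h2 := c2_step (h.2.2 (j + 2 * k)) (by rw [h1]) (by rw [h1]) (by rw [h1]; simpa)
      rw [h1] at h2
      simp only at h2
      have h3 := d3_step (h.2.2 (j + 2 * k + 1)) (by rw [h2]) (by rw [h2])
      rw [h2] at h3
      simp only at h3
      rw [show j + 2 * (k + 1) = j + 2 * k + 1 + 1 by ring, h3]
      congr 1
  by_contra hN
  push_neg at hN
  have hN1 : 1 ≤ N := h.1
  rcases Nat.even_or_odd N with ⟨k, hk⟩ | ⟨k, hk⟩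
  · have hkr : k ≤ a - b := by omega
    have := key k hkr
    have hNe : p (j + 2 * k) = p j := by
      rw [show j + 2 * k = j + N by omega, h.2.1]
    rw [hNe, hp] at this
    have : a = a - k := by
      have := congrArg ChSt.m this
      simpa using this
    omega
  · have hkr : k < a - b := by omega
    have h1 := key k (by omega)
    have h2 := c2_step (h.2.2 (j + 2 * k)) (by rw [h1]) (by rw [h1]) (by rw [h1]; simp; omega)
    have hNe : p (j + 2 * k + 1) = p j := by
      rw [show j + 2 * k + 1 = j + N by omega, h.2.1]
    rw [hNe, hp] at h2
    have := congrArg ChSt.isD h2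
    simp at this

end Stmt19Aux

namespace Stmt19Aux

lemma c1_step {x y : ChSt} (hs : ChStep x y) (hD : x.isD = false) (hi : x.i = 1) :
    y = ⟨false, x.m, x.n, 2⟩ ∨ y = ⟨true, x.m, x.n, 1⟩ := by
  rcases hs with ⟨h1,h2,h3⟩|⟨h1,h2,h3⟩|⟨h1,h2,h3,h4⟩|⟨h1,h2,h3,h4,h5⟩|⟨h1,h2,h3,h4⟩|
    ⟨h1,h2,h3,h4,h5⟩|⟨h1,h2,h3⟩|⟨h1,h2,h3⟩|⟨h1,h2,h3⟩|⟨h1,h2,h3⟩|⟨h1,h2,h3⟩ <;>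
    first | omega | simp_all

lemma c2_step_full {x y : ChSt} (hs : ChStep x y) (hD : x.isD = false) (hi : x.i = 2) :
    (x.m = x.n ∧ y = ⟨false, x.m, x.n, 3⟩) ∨
    (x.m ≠ x.n ∧ 1 ≤ x.m ∧ y = ⟨true, x.m - 1, x.n, 3⟩) := by
  rcases hs with ⟨h1,h2,h3⟩|⟨h1,h2,h3⟩|⟨h1,h2,h3,h4⟩|⟨h1,h2,h3,h4,h5⟩|⟨h1,h2,h3,h4⟩|
    ⟨h1,h2,h3,h4,h5⟩|⟨h1,h2,h3⟩|⟨h1,h2,h3⟩|⟨h1,h2,h3⟩|⟨h1,h2,h3⟩|⟨h1,h2,h3⟩ <;>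
    first | omega | simp_all

lemma c3_step_full {x y : ChSt} (hs : ChStep x y) (hD : x.isD = false) (hi : x.i = 3) :
    (x.n = 0 ∧ y = ⟨false, x.m, x.n, 1⟩) ∨
    (x.n ≠ 0 ∧ 1 ≤ x.m ∧ y = ⟨true, x.m - 1, x.n - 1, 2⟩) := by
  rcases hs with ⟨h1,h2,h3⟩|⟨h1,h2,h3⟩|⟨h1,h2,h3,h4⟩|⟨h1,h2,h3,h4,h5⟩|⟨h1,h2,h3,h4⟩|
    ⟨h1,h2,h3,h4,h5⟩|⟨h1,h2,h3⟩|⟨h1,h2,h3⟩|⟨h1,h2,h3⟩|⟨h1,h2,h3⟩|⟨h1,h2,h3⟩ <;>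
    first | omega | simp_all

lemma d1_step {x y : ChSt} (hs : ChStep x y) (hD : x.isD = true) (hi : x.i = 1) :
    y = ⟨false, x.m + 1, x.n + 1, 1⟩ ∨ y = ⟨true, x.m, x.n, 2⟩ := by
  rcases hs with ⟨h1,h2,h3⟩|⟨h1,h2,h3⟩|⟨h1,h2,h3,h4⟩|⟨h1,h2,h3,h4,h5⟩|⟨h1,h2,h3,h4⟩|
    ⟨h1,h2,h3,h4,h5⟩|⟨h1,h2,h3⟩|⟨h1,h2,h3⟩|⟨h1,h2,h3⟩|⟨h1,h2,h3⟩|⟨h1,h2,h3⟩ <;>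
    first | omega | simp_all

lemma d2_step {x y : ChSt} (hs : ChStep x y) (hD : x.isD = true) (hi : x.i = 2) :
    y = ⟨false, x.m + 1, x.n, 3⟩ ∨ y = ⟨true, x.m, x.n, 3⟩ := by
  rcases hs with ⟨h1,h2,h3⟩|⟨h1,h2,h3⟩|⟨h1,h2,h3,h4⟩|⟨h1,h2,h3,h4,h5⟩|⟨h1,h2,h3,h4⟩|
    ⟨h1,h2,h3,h4,h5⟩|⟨h1,h2,h3⟩|⟨h1,h2,h3⟩|⟨h1,h2,h3⟩|⟨h1,h2,h3⟩|⟨h1,h2,h3⟩ <;>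
    first | omega | simp_all

lemma src_cases {x y : ChSt} (hs : ChStep x y) :
    (x.isD = false ∧ x.i = 1) ∨ (x.isD = false ∧ x.i = 2) ∨ (x.isD = false ∧ x.i = 3) ∨
    (x.isD = true ∧ x.i = 1) ∨ (x.isD = true ∧ x.i = 2) ∨ (x.isD = true ∧ x.i = 3) := by
  rcases hs with ⟨h1,h2,h3⟩|⟨h1,h2,h3⟩|⟨h1,h2,h3,h4⟩|⟨h1,h2,h3,h4,h5⟩|⟨h1,h2,h3,h4⟩|
    ⟨h1,h2,h3,h4,h5⟩|⟨h1,h2,h3⟩|⟨h1,h2,h3⟩|⟨h1,h2,h3⟩|⟨h1,h2,h3⟩|⟨h1,h2,h3⟩ <;>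
    simp_all

lemma pred_c1 {x y : ChSt} (hs : ChStep x y) (hD : y.isD = false) (hi : y.i = 1) :
    (x.isD = false ∧ x.i = 3 ∧ x.n = 0 ∧ y = ⟨false, x.m, x.n, 1⟩) ∨
    (x.isD = true ∧ x.i = 1 ∧ y = ⟨false, x.m + 1, x.n + 1, 1⟩) := by
  rcases hs with ⟨h1,h2,h3⟩|⟨h1,h2,h3⟩|⟨h1,h2,h3,h4⟩|⟨h1,h2,h3,h4,h5⟩|⟨h1,h2,h3,h4⟩|
    ⟨h1,h2,h3,h4,h5⟩|⟨h1,h2,h3⟩|⟨h1,h2,h3⟩|⟨h1,h2,h3⟩|⟨h1,h2,h3⟩|⟨h1,h2,h3⟩ <;>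
    simp_all

lemma pred_d1 {x y : ChSt} (hs : ChStep x y) (hD : y.isD = true) (hi : y.i = 1) :
    x.isD = false ∧ x.i = 1 ∧ y = ⟨true, x.m, x.n, 1⟩ := by
  rcases hs with ⟨h1,h2,h3⟩|⟨h1,h2,h3⟩|⟨h1,h2,h3,h4⟩|⟨h1,h2,h3,h4,h5⟩|⟨h1,h2,h3,h4⟩|
    ⟨h1,h2,h3,h4,h5⟩|⟨h1,h2,h3⟩|⟨h1,h2,h3⟩|⟨h1,h2,h3⟩|⟨h1,h2,h3⟩|⟨h1,h2,h3⟩ <;>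
    simp_all

end Stmt19Aux

namespace Stmt19Aux

def gq (s : ChSt) : ℕ := 2 * s.m + (if s.isD then 1 else 0)

variable {N : ℕ} {p : ℕ → ChSt}

lemma diff_le (h : IsClosedChPath N p) (j : ℕ) : (p j).m - (p j).n ≤ N := by
  have hN1 : 1 ≤ N := h.1
  set M := (Finset.range N).sup (fun t => (p t).m - (p t).n) with hMdef
  have hbound : ∀ t, (p t).m - (p t).n ≤ M := by
    intro t
    rw [per_mod h t]
    exact Finset.le_sup (f := fun t => (p t).m - (p t).n) (Finset.mem_range.mpr (Nat.mod_lt _ hN1))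
  rcases Nat.eq_zero_or_pos M with h0 | hMpos
  · have := hbound j; omega
  obtain ⟨t0, _, ht0⟩ := Finset.exists_mem_eq_sup (Finset.range N)
    ⟨0, Finset.mem_range.mpr hN1⟩ (fun t => (p t).m - (p t).n)
  rw [← hMdef] at ht0
  -- ht0 : M = (p t0).m - (p t0).n
  have claimA : ∃ k cm cn, p k = ⟨false, cm, cn, 2⟩ ∧ cm - cn = M := by
    by_contra hno
    push_neg at hno
    have hno' : ∀ k, ¬((p k).isD = false ∧ (p k).i = 2 ∧ (p k).m - (p k).n = M) := by
      rintro k ⟨h1, h2, h3⟩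
      exact hno k (p k).m (p k).n (eta2 _ h1 h2) h3
    have inv : ∀ t, (p (t0 + t)).m - (p (t0 + t)).n = M ∧
        ¬((p (t0 + t)).isD = false ∧ (p (t0 + t)).i = 2) := by
      intro t
      induction t with
      | zero =>
        refine ⟨ht0.symm, fun hc => hno' t0 ⟨hc.1, hc.2, ht0.symm⟩⟩
      | succ t ih =>
        have hs := h.2.2 (t0 + t)
        have hI := ih.1
        rw [show t0 + (t + 1) = t0 + t + 1 from rfl]
        rcases src_cases hs with ⟨hD,hi⟩|⟨hD,hi⟩|⟨hD,hi⟩|⟨hD,hi⟩|⟨hD,hi⟩|⟨hD,hi⟩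
        · rcases c1_step hs hD hi with hy|hy
          · exact absurd ⟨by rw [hy], by rw [hy], by rw [hy]; exact hI⟩ (hno' (t0 + t + 1))
          · rw [hy]; exact ⟨hI, by simp⟩
        · exact absurd ⟨hD, hi⟩ ih.2
        · rcases c3_step_full hs hD hi with ⟨hn0, hy⟩|⟨hn0, hm1, hy⟩
          · rw [hy]; exact ⟨hI, by simp⟩
          · rw [hy]
            refine ⟨?_, by simp⟩
            show (p (t0 + t)).m - 1 - ((p (t0 + t)).n - 1) = M
            omega
        · rcases d1_step hs hD hi with hy|hy
          · rw [hy]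
            refine ⟨?_, by simp⟩
            show (p (t0 + t)).m + 1 - ((p (t0 + t)).n + 1) = M
            omega
          · rw [hy]; exact ⟨hI, by simp⟩
        · rcases d2_step hs hD hi with hy|hy
          · exfalso
            have hb : (p (t0 + t)).m + 1 - (p (t0 + t)).n ≤ M := by
              have hb0 := hbound (t0 + t + 1)
              rw [hy] at hb0
              exact hb0
            omega
          · rw [hy]; exact ⟨hI, by simp⟩
        · have hy := d3_step hs hD hi
          exact absurd ⟨by rw [hy], by rw [hy], by rw [hy]; exact hI⟩ (hno' (t0 + t + 1))
    have noD3 : ∀ t, ¬((p (t0 + t)).isD = true ∧ (p (t0 + t)).i = 3) := by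
      rintro t ⟨h1, h2⟩
      have hy := d3_step (h.2.2 (t0 + t)) h1 h2
      have hc := (inv (t + 1)).2
      rw [show t0 + (t + 1) = t0 + t + 1 from rfl, hy] at hc
      exact hc ⟨rfl, rfl⟩
    have noD2 : ∀ t, ¬((p (t0 + t)).isD = true ∧ (p (t0 + t)).i = 2) := by
      rintro t ⟨h1, h2⟩
      rcases d2_step (h.2.2 (t0 + t)) h1 h2 with hy|hy
      · have hb : (p (t0 + t)).m + 1 - (p (t0 + t)).n ≤ M := by
          have hb0 := hbound (t0 + t + 1)
          rw [hy] at hb0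
          exact hb0
        have hI := (inv t).1
        omega
      · have hc := noD3 (t + 1)
        rw [show t0 + (t + 1) = t0 + t + 1 from rfl, hy] at hc
        exact hc ⟨rfl, rfl⟩
    have noC3 : ∀ t, ¬((p (t0 + t + 1)).isD = false ∧ (p (t0 + t + 1)).i = 3) := by
      rintro t ⟨h1, h2⟩
      have hs := h.2.2 (t0 + t)
      rcases src_cases hs with ⟨hD,hi⟩|⟨hD,hi⟩|⟨hD,hi⟩|⟨hD,hi⟩|⟨hD,hi⟩|⟨hD,hi⟩
      · rcases c1_step hs hD hi with hy|hy <;> rw [hy] at h2 <;> simp at h2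
      · exact (inv t).2 ⟨hD, hi⟩
      · rcases c3_step_full hs hD hi with ⟨_, hy⟩|⟨_, _, hy⟩ <;> rw [hy] at h2 <;> simp at h2
      · rcases d1_step hs hD hi with hy|hy <;> rw [hy] at h2 <;> simp at h2
      · exact noD2 t ⟨hD, hi⟩
      · have hy := d3_step hs hD hi
        rw [hy] at h2; simp at h2
    have cd1 : ∀ t, ((p (t0 + t + 1)).isD = false ∧ (p (t0 + t + 1)).i = 1) ∨
        ((p (t0 + t + 1)).isD = true ∧ (p (t0 + t + 1)).i = 1) := by
      intro t
      have hs2 := h.2.2 (t0 + t + 1)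
      rcases src_cases hs2 with c|c|c|c|c|c
      · exact Or.inl c
      · exact absurd c (inv (t + 1)).2
      · exact absurd c (noC3 t)
      · exact Or.inr c
      · exact absurd c (noD2 (t + 1))
      · exact absurd c (noD3 (t + 1))
    have gstep : ∀ t, gq (p (t0 + t + 1 + 1)) = gq (p (t0 + t + 1)) + 1 := by
      intro t
      have hs := h.2.2 (t0 + t + 1)
      rcases cd1 t with ⟨hD, hi⟩|⟨hD, hi⟩
      · rcases c1_step hs hD hi with hy|hy
        · exfalso
          exact (inv (t + 2)).2 ⟨by rw [show t0 + (t + 2) = t0 + t + 1 + 1 from rfl, hy],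
            by rw [show t0 + (t + 2) = t0 + t + 1 + 1 from rfl, hy]⟩
        · rw [hy]; simp [gq, hD]
      · rcases d1_step hs hD hi with hy|hy
        · rw [hy]; simp [gq, hD]; omega
        · exfalso
          exact noD2 (t + 2) ⟨by rw [show t0 + (t + 2) = t0 + t + 1 + 1 from rfl, hy],
            by rw [show t0 + (t + 2) = t0 + t + 1 + 1 from rfl, hy]⟩
    have glin : ∀ k, gq (p (t0 + 1 + k)) = gq (p (t0 + 1)) + k := by
      intro k
      induction k with
      | zero => simp
      | succ k ih =>
        have hg := gstep k
        rw [show t0 + 1 + (k + 1) = t0 + k + 1 + 1 by omega,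
          show t0 + 1 + k = t0 + k + 1 by omega] at *
        omega
    have hper2 : p (t0 + 1 + 2 * N) = p (t0 + 1) := per_mul h 2 (t0 + 1)
    have := glin (2 * N)
    rw [hper2] at this
    omega
  obtain ⟨k, cm, cn, hpk, hd⟩ := claimA
  have hcn : cn < cm := by omega
  have hz := zigzag h k cm cn hpk hcn
  have := hbound j
  omega

end Stmt19Aux

namespace Stmt19Aux

variable {N : ℕ} {p : ℕ → ChSt}

lemma step_back (h : IsClosedChPath N p) (t : ℕ) : ChStep (p (t + N - 1)) (p t) := by
  have hN1 : 1 ≤ N := h.1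
  have he : t + N - 1 + 1 = t + N := by omega
  have := h.2.2 (t + N - 1)
  rw [he, h.2.1] at this
  exact this

lemma n_le (h : IsClosedChPath N p) (j : ℕ) : (p j).n ≤ N := by
  have hN1 : 1 ≤ N := h.1
  have hzero : ∃ t0, (p t0).n = 0 := by
    by_contra hpos
    push_neg at hpos
    -- no c1 states, by strong induction on m
    have noC1 : ∀ m' t, ¬((p t).isD = false ∧ (p t).i = 1 ∧ (p t).m = m') := by
      intro m'
      induction m' using Nat.strong_induction_on with
      | _ m' ihm =>
        rintro t ⟨h1, h2, h3⟩
        have hs := step_back h t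
        rcases pred_c1 hs h1 h2 with ⟨hD, hi, hn0, hy⟩ | ⟨hD, hi, hy⟩
        · exact hpos _ hn0
        · -- p (t+N-1) is a d1 state; its predecessor is a c1 state with smaller m
          have hs2 := step_back h (t + N - 1)
          have hd := pred_d1 hs2 hD hi
          have hm : (p (t + N - 1)).m + 1 = m' := by rw [hy] at h3; exact h3
          have hm2 : (p (t + N - 1 + N - 1)).m = (p (t + N - 1)).m := by
            have := hd.2.2
            rw [this]
          exact ihm (p (t + N - 1)).m (by omega) (t + N - 1 + N - 1)
            ⟨hd.1, hd.2.1, hm2⟩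
    have noD1 : ∀ t, ¬((p t).isD = true ∧ (p t).i = 1) := by
      rintro t ⟨h1, h2⟩
      have hd := pred_d1 (step_back h t) h1 h2
      exact noC1 (p (t + N - 1)).m (t + N - 1) ⟨hd.1, hd.2.1, rfl⟩
    have nMono : ∀ t, (p (t + 1)).n ≤ (p t).n := by
      intro t
      have hs := h.2.2 t
      rcases src_cases hs with ⟨hD,hi⟩|⟨hD,hi⟩|⟨hD,hi⟩|⟨hD,hi⟩|⟨hD,hi⟩|⟨hD,hi⟩
      · rcases c1_step hs hD hi with hy|hy <;> rw [hy]
      · rcases c2_step_full hs hD hi with ⟨_, hy⟩|⟨_, _, hy⟩ <;> rw [hy]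
      · rcases c3_step_full hs hD hi with ⟨_, hy⟩|⟨_, _, hy⟩ <;> rw [hy]
        · exact Nat.sub_le _ _
      · exact absurd ⟨hD, hi⟩ (noD1 t)
      · rcases d2_step hs hD hi with hy|hy <;> rw [hy]
      · rw [d3_step hs hD hi]
    have nMonoK : ∀ t k, (p (t + k)).n ≤ (p t).n := by
      intro t k
      induction k with
      | zero => exact le_refl _
      | succ k ih => exact le_trans (nMono (t + k)) ih
    have nConst : ∀ t, (p (t + 1)).n = (p t).n := by
      intro t
      have h1 : (p (t + 1 + (N - 1))).n ≤ (p (t + 1)).n := nMonoK (t + 1) (N - 1)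
      rw [show t + 1 + (N - 1) = t + N by omega, h.2.1] at h1
      exact le_antisymm (nMono t) h1
    have noC3 : ∀ t, ¬((p t).isD = false ∧ (p t).i = 3) := by
      rintro t ⟨h1, h2⟩
      rcases c3_step_full (h.2.2 t) h1 h2 with ⟨hn0, hy⟩|⟨hn0, hm1, hy⟩
      · exact hpos t hn0
      · have := nConst t
        rw [hy] at this
        have hn : (p t).n - 1 = (p t).n := this
        have := hpos t
        omega
    have mMono : ∀ t, (p (t + 1)).m ≤ (p t).m := by
      intro t
      have hs := h.2.2 t
      rcases src_cases hs with ⟨hD,hi⟩|⟨hD,hi⟩|⟨hD,hi⟩|⟨hD,hi⟩|⟨hD,hi⟩|⟨hD,hi⟩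
      · rcases c1_step hs hD hi with hy|hy <;> rw [hy]
      · rcases c2_step_full hs hD hi with ⟨_, hy⟩|⟨_, _, hy⟩ <;> rw [hy]
        · exact Nat.sub_le _ _
      · rcases c3_step_full hs hD hi with ⟨_, hy⟩|⟨_, _, hy⟩ <;> rw [hy]
        · exact Nat.sub_le _ _
      · exact absurd ⟨hD, hi⟩ (noD1 t)
      · rcases d2_step hs hD hi with hy|hy
        · exfalso
          exact noC3 (t + 1) ⟨by rw [hy], by rw [hy]⟩
        · rw [hy]
      · rw [d3_step hs hD hi]
    have mConst : ∀ t, (p (t + 1)).m = (p t).m := by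
      intro t
      have hK : ∀ s k, (p (s + k)).m ≤ (p s).m := by
        intro s k
        induction k with
        | zero => exact le_refl _
        | succ k ih => exact le_trans (mMono (s + k)) ih
      have h1 : (p (t + 1 + (N - 1))).m ≤ (p (t + 1)).m := hK (t + 1) (N - 1)
      rw [show t + 1 + (N - 1) = t + N by omega, h.2.1] at h1
      exact le_antisymm (mMono t) h1
    have noC2 : ∀ t, ¬((p t).isD = false ∧ (p t).i = 2) := by
      rintro t ⟨h1, h2⟩
      rcases c2_step_full (h.2.2 t) h1 h2 with ⟨heq, hy⟩|⟨hne, hm1, hy⟩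
      · exact noC3 (t + 1) ⟨by rw [hy], by rw [hy]⟩
      · have := mConst t
        rw [hy] at this
        have hm : (p t).m - 1 = (p t).m := this
        omega
    have noD3 : ∀ t, ¬((p t).isD = true ∧ (p t).i = 3) := by
      rintro t ⟨h1, h2⟩
      have hy := d3_step (h.2.2 t) h1 h2
      exact noC2 (t + 1) ⟨by rw [hy], by rw [hy]⟩
    have noD2 : ∀ t, ¬((p t).isD = true ∧ (p t).i = 2) := by
      rintro t ⟨h1, h2⟩
      rcases d2_step (h.2.2 t) h1 h2 with hy|hy
      · exact noC3 (t + 1) ⟨by rw [hy], by rw [hy]⟩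
      · exact noD3 (t + 1) ⟨by rw [hy], by rw [hy]⟩
    rcases src_cases (h.2.2 0) with c|c|c|c|c|c
    · exact noC1 (p 0).m 0 ⟨c.1, c.2, rfl⟩
    · exact noC2 0 c
    · exact noC3 0 c
    · exact noD1 0 c
    · exact noD2 0 c
    · exact noD3 0 c
  obtain ⟨t0, ht0⟩ := hzero
  have nStep : ∀ t, (p (t + 1)).n ≤ (p t).n + 1 := by
    intro t
    have hs := h.2.2 t
    rcases src_cases hs with ⟨hD,hi⟩|⟨hD,hi⟩|⟨hD,hi⟩|⟨hD,hi⟩|⟨hD,hi⟩|⟨hD,hi⟩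
    · rcases c1_step hs hD hi with hy|hy <;> rw [hy] <;> exact Nat.le_succ _
    · rcases c2_step_full hs hD hi with ⟨_, hy⟩|⟨_, _, hy⟩ <;> rw [hy] <;> exact Nat.le_succ _
    · rcases c3_step_full hs hD hi with ⟨_, hy⟩|⟨_, _, hy⟩
      · rw [hy]; exact Nat.le_succ _
      · rw [hy]; exact le_trans (Nat.sub_le _ _) (Nat.le_succ _)
    · rcases d1_step hs hD hi with hy|hy <;> rw [hy] <;> exact Nat.le_succ _
    · rcases d2_step hs hD hi with hy|hy <;> rw [hy] <;> exact Nat.le_succ _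
    · rw [d3_step hs hD hi]; exact Nat.le_succ _
  have nGrow : ∀ k, (p (t0 + k)).n ≤ k := by
    intro k
    induction k with
    | zero => simp [ht0]
    | succ k ih =>
      have := nStep (t0 + k)
      rw [show t0 + (k + 1) = t0 + k + 1 from rfl]
      omega
  -- find k < N with p j = p (t0 + k)
  have hle : t0 ≤ j + t0 * N := by
    calc t0 = t0 * 1 := by ring
    _ ≤ t0 * N := Nat.mul_le_mul_left t0 hN1
    _ ≤ j + t0 * N := Nat.le_add_left _ _
  set k := (j + t0 * N - t0) % N with hk
  have hkN : k < N := Nat.mod_lt _ hN1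
  have hmod : (t0 + k) % N = j % N := by
    rw [hk, Nat.add_mod_mod, show t0 + (j + t0 * N - t0) = j + t0 * N by omega,
      Nat.add_mul_mod_self_right]
  have hpj : p j = p (t0 + k) := per_mod' h hmod.symm
  rw [hpj]
  exact le_trans (nGrow k) (by omega)

end Stmt19Aux


/-- In the directed weighted graph on the states `c_{m,n,i}`, `d_{m,n,i}`
of the `PGL₃(𝔽_q[t])` adjacency table, any closed positive-weight path of length `N`
visiting a state `c_{m,n,2}` with `m - n = r > 0` (the start of the forced descending
zig-zag `c_{m,n,2} → d_{m-1,n,3} → c_{m-1,n,2} → ⋯ → c_{n,n,2}`) satisfies `N ≥ 2r + 1`.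
Consequently every state visited by a closed path of length `N` satisfies `m - n ≤ N`,
and the set of all states visited by closed paths of length `N` is finite. -/
theorem stmt19 (N : ℕ) :
    (∀ p : ℕ → ChSt, IsClosedChPath N p →
      ∀ j m n, p j = ⟨false, m, n, 2⟩ → n < m → 2 * (m - n) + 1 ≤ N) ∧
    (∀ p : ℕ → ChSt, IsClosedChPath N p → ∀ j, (p j).m - (p j).n ≤ N) ∧
    {s : ChSt | ∃ p : ℕ → ChSt, IsClosedChPath N p ∧ ∃ j, p j = s}.Finite := by
  refine ⟨fun p hp j m n hpj hmn => Stmt19Aux.zigzag hp j m n hpj hmn,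
    fun p hp j => Stmt19Aux.diff_le hp j, ?_⟩
  have hsub : {s : ChSt | ∃ p : ℕ → ChSt, IsClosedChPath N p ∧ ∃ j, p j = s} ⊆
      {s : ChSt | s.m ≤ 2 * N ∧ s.n ≤ N ∧ s.i ≤ 3} := by
    rintro s ⟨p, hp, j, rfl⟩
    refine ⟨?_, Stmt19Aux.n_le hp j, ?_⟩
    · have h1 := Stmt19Aux.diff_le hp j
      have h2 := Stmt19Aux.n_le hp j
      omega
    · exact Stmt19Aux.target_i (Stmt19Aux.step_back hp j)
  apply Set.Finite.subset ?_ hsub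
  have hfin : (Set.univ ×ˢ Set.Iic (2 * N) ×ˢ Set.Iic N ×ˢ Set.Iic 3 :
      Set (Bool × ℕ × ℕ × ℕ)).Finite :=
    Set.finite_univ.prod ((Set.finite_Iic _).prod ((Set.finite_Iic _).prod (Set.finite_Iic _)))
  have hinj : Function.Injective (fun s : ChSt => (s.isD, s.m, s.n, s.i)) := by
    intro a b hab
    cases a; cases b; simp_all
  have hss : {s : ChSt | s.m ≤ 2 * N ∧ s.n ≤ N ∧ s.i ≤ 3} ⊆
      (fun s : ChSt => (s.isD, s.m, s.n, s.i)) ⁻¹'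
        (Set.univ ×ˢ Set.Iic (2 * N) ×ˢ Set.Iic N ×ˢ Set.Iic 3) := by
    rintro s ⟨h1, h2, h3⟩
    exact ⟨Set.mem_univ _, h1, h2, h3⟩
  exact Set.Finite.subset (Set.Finite.preimage (Set.injOn_of_injective hinj) hfin) hss
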